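/- arXiv:2509.00606 — 6 statements merged into one kernel-verified Lean document; each statement's English description precedes it below -/
import Mathlib

section
/- Let H : ℝ → ℝ be infinitely differentiable with H(t) = 0 for all t ≤ 0. Then the function ℝ² → ℝ defined by (x,y) ↦ H(√(x²+y²))/(x²+y²) for (x,y) ≠ (0,0) and by 0 at the origin, is infinitely differentiable on all of ℝ². -/
/-!
Write `G = φ ∘ (x² + y²)` with `φ s = H(√s) s⁻¹`, so it suffices that `φ` is smooth on `ℝ`.
More generally `φ_{H,a}(s) = H(√s) s^{-a}` is smooth for every real `a` and every smooth `H`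
vanishing on `(-∞, 0]`. Such an `H` is flat at `0` (`|H t| ≤ C tⁿ` near `0` for every `n`, by
the mean value theorem applied repeatedly to its derivatives), hence every `φ_{H,a}` is continuous
at `0`. Away from `0` the chain rule gives
`φ_{H,a}' = ½ φ_{H',a+½} - a φ_{H,a+1}`, and `H'` is again smooth and vanishes on `(-∞, 0]`;
continuity of the right-hand side at `0` extends this identity to `0`. So the family is closed
under differentiation, and induction on the order gives smoothness.
-/

open Real Filter Set Topology
open scoped ContDiff

/-- For `s ≤ 0` we have `√s = 0`, so this vanishes on `(-∞, 0]` as soon as `H 0 = 0`. -/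
noncomputable def compSqrtMulRpow (H : ℝ → ℝ) (a s : ℝ) : ℝ := H (√s) * s ^ (-a)

variable {H : ℝ → ℝ}

lemma deriv_eq_zero_of_forall_nonpos (hH : ContDiff ℝ 1 H) (hH0 : ∀ t ≤ 0, H t = 0) :
    ∀ t ≤ 0, deriv H t = 0 := by
  have hneg : EqOn (deriv H) 0 (Iio 0) := fun t ht => by
    have : H =ᶠ[𝓝 t] fun _ => 0 := eventually_of_mem (Iio_mem_nhds ht) fun x hx => hH0 x hx.le
    simp [this.deriv_eq]
  intro t ht
  exact hneg.closure (contDiff_one_iff_deriv.1 hH).2 continuous_const (by simpa using ht)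

lemma exists_abs_le_mul_pow_of_forall_nonpos (hH : ContDiff ℝ ∞ H) (hH0 : ∀ t ≤ 0, H t = 0)
    (n : ℕ) : ∃ C, ∀ t ∈ Icc (0 : ℝ) 1, |H t| ≤ C * t ^ n := by
  induction n generalizing H with
  | zero =>
    obtain ⟨C, hC⟩ := isCompact_Icc.exists_bound_of_continuousOn hH.continuous.continuousOn
    exact ⟨C, fun t ht => by simpa using hC t ht⟩
  | succ n ih =>
    obtain ⟨hdiff, hH'⟩ := contDiff_infty_iff_deriv.1 hH
    obtain ⟨C, hC⟩ := ih hH' (deriv_eq_zero_of_forall_nonpos (hH.of_le (by simp)) hH0)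
    refine ⟨|C|, fun t ⟨ht0, ht1⟩ => ?_⟩
    have hbound : ∀ u ∈ Icc 0 t, ‖deriv H u‖ ≤ |C| * t ^ n := fun u ⟨hu0, hut⟩ =>
      calc |deriv H u| ≤ C * u ^ n := hC u ⟨hu0, hut.trans ht1⟩
        _ ≤ |C| * t ^ n := by gcongr; exact le_abs_self C
    have := (convex_Icc 0 t).norm_image_sub_le_of_norm_deriv_le (fun u _ => hdiff u) hbound
      (left_mem_Icc.2 ht0) (right_mem_Icc.2 ht0)
    rw [hH0 0 le_rfl, sub_zero, sub_zero, Real.norm_eq_abs, Real.norm_of_nonneg ht0] at this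
    rw [pow_succ, ← mul_assoc]
    exact this

lemma compSqrtMulRpow_of_nonpos (hH0 : ∀ t ≤ 0, H t = 0) (a : ℝ) {s : ℝ} (hs : s ≤ 0) :
    compSqrtMulRpow H a s = 0 := by
  simp [compSqrtMulRpow, sqrt_eq_zero'.2 hs, hH0]

lemma continuousAt_compSqrtMulRpow_zero (hH : ContDiff ℝ ∞ H) (hH0 : ∀ t ≤ 0, H t = 0)
    (a : ℝ) : ContinuousAt (compSqrtMulRpow H a) 0 := by
  obtain ⟨m, hm⟩ := exists_nat_gt a
  obtain ⟨C, hC⟩ := exists_abs_le_mul_pow_of_forall_nonpos hH hH0 (2 * m)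
  have hbound : ∀ s ≤ 1, ‖compSqrtMulRpow H a s‖ ≤ |C| * |s| ^ (m - a) := by
    intro s hs1
    rcases le_or_gt s 0 with hs0 | hs0
    · rw [compSqrtMulRpow_of_nonpos hH0 a hs0, norm_zero]
      positivity
    have hsqrt : √s ∈ Icc (0 : ℝ) 1 := ⟨sqrt_nonneg s, sqrt_le_one.2 hs1⟩
    calc ‖compSqrtMulRpow H a s‖ = |H √s| * s ^ (-a) := by
          rw [compSqrtMulRpow, norm_mul, Real.norm_eq_abs, Real.norm_of_nonneg (by positivity)]
      _ ≤ C * √s ^ (2 * m) * s ^ (-a) := by gcongr; exact hC _ hsqrt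
      _ = C * s ^ (m - a) := by
          rw [pow_mul, sq_sqrt hs0.le, ← rpow_natCast, mul_assoc, ← rpow_add hs0, sub_eq_add_neg]
      _ ≤ |C| * |s| ^ (m - a) := by
          rw [abs_of_pos hs0]; gcongr; exact le_abs_self C
  have hlim : Tendsto (fun s : ℝ => |C| * |s| ^ (m - a)) (𝓝 0) (𝓝 0) := by
    have : Continuous fun s : ℝ => |C| * |s| ^ (m - a) := by
      have := continuous_rpow_const (sub_nonneg.2 hm.le)
      fun_prop
    simpa [zero_rpow (sub_ne_zero.2 hm.ne')] using this.tendsto 0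
  rw [ContinuousAt, compSqrtMulRpow_of_nonpos hH0 a le_rfl]
  exact squeeze_zero_norm' (eventually_le_nhds one_pos |>.mono hbound) hlim

lemma hasDerivAt_compSqrtMulRpow_of_pos (hH : Differentiable ℝ H) (a : ℝ) {s : ℝ} (hs : 0 < s) :
    HasDerivAt (compSqrtMulRpow H a)
      (2⁻¹ * compSqrtMulRpow (deriv H) (a + 2⁻¹) s - a * compSqrtMulRpow H (a + 1) s) s := by
  have hsqrt : HasDerivAt (fun x => H √x) (deriv H √s * (1 / (2 * √s))) s :=
    (hH √s).hasDerivAt.comp s (hasDerivAt_sqrt hs.ne')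
  refine (hsqrt.mul (hasDerivAt_rpow_const (p := -a) (Or.inl hs.ne'))).congr_deriv ?_
  have hhalf : s ^ (-(a + 2⁻¹)) = s ^ (-a) / √s := by
    rw [sqrt_eq_rpow, ← rpow_sub hs]; ring_nf
  rw [compSqrtMulRpow, compSqrtMulRpow, hhalf, neg_add', rpow_sub_one hs.ne']
  field_simp
  ring

lemma hasDerivAt_compSqrtMulRpow (hH : ContDiff ℝ ∞ H) (hH0 : ∀ t ≤ 0, H t = 0) (a s : ℝ) :
    HasDerivAt (compSqrtMulRpow H a)
      (2⁻¹ * compSqrtMulRpow (deriv H) (a + 2⁻¹) s - a * compSqrtMulRpow H (a + 1) s) s := by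
  obtain ⟨hdiff, hH'⟩ := contDiff_infty_iff_deriv.1 hH
  have hH'0 := deriv_eq_zero_of_forall_nonpos (hH.of_le (by simp)) hH0
  refine hasDerivAt_of_hasDerivAt_of_ne' (x := 0) (fun s hs => ?_)
    (continuousAt_compSqrtMulRpow_zero hH hH0 a)
    (((continuousAt_compSqrtMulRpow_zero hH' hH'0 _).const_mul _).sub
      ((continuousAt_compSqrtMulRpow_zero hH hH0 _).const_mul _)) s
  rcases hs.lt_or_gt with hs | hs
  · have hzero : compSqrtMulRpow H a =ᶠ[𝓝 s] fun _ => 0 :=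
      eventually_of_mem (Iio_mem_nhds hs) fun x hx => compSqrtMulRpow_of_nonpos hH0 a hx.le
    simpa [compSqrtMulRpow_of_nonpos hH0 _ hs.le, compSqrtMulRpow_of_nonpos hH'0 _ hs.le] using
      (hasDerivAt_const s (0 : ℝ)).congr_of_eventuallyEq hzero
  · exact hasDerivAt_compSqrtMulRpow_of_pos hdiff a hs

lemma contDiff_compSqrtMulRpow (hH : ContDiff ℝ ∞ H) (hH0 : ∀ t ≤ 0, H t = 0) (a : ℝ) :
    ContDiff ℝ ∞ (compSqrtMulRpow H a) := by
  refine contDiff_infty.2 fun n => ?_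
  induction n generalizing H a with
  | zero =>
    exact contDiff_zero.2 <| continuous_iff_continuousAt.2 fun s =>
      (hasDerivAt_compSqrtMulRpow hH hH0 a s).continuousAt
  | succ n ih =>
    obtain ⟨-, hH'⟩ := contDiff_infty_iff_deriv.1 hH
    have hH'0 := deriv_eq_zero_of_forall_nonpos (hH.of_le (by simp)) hH0
    have hderiv := hasDerivAt_compSqrtMulRpow hH hH0 a
    rw [Nat.cast_succ, contDiff_succ_iff_deriv, funext fun s => (hderiv s).deriv]
    exact ⟨fun s => (hderiv s).differentiableAt, by simp,
      (contDiff_const.mul (ih hH' hH'0 _)).sub (contDiff_const.mul (ih hH hH0 _))⟩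

/-- If `H : ℝ → ℝ` is infinitely differentiable and vanishes on `(-∞, 0]`, then the function
`(x, y) ↦ H(√(x² + y²))/(x² + y²)` for `(x, y) ≠ (0, 0)`, taking the value `0` at the origin,
is infinitely differentiable on all of `ℝ²`. -/
theorem stmt_4 (H : ℝ → ℝ) (hH : ContDiff ℝ (⊤ : ℕ∞) H) (hH0 : ∀ t ≤ (0 : ℝ), H t = 0)
    (G : ℝ × ℝ → ℝ)
    (hG : ∀ p : ℝ × ℝ,
      G p = if p = (0, 0) then 0 else H (Real.sqrt (p.1 ^ 2 + p.2 ^ 2)) / (p.1 ^ 2 + p.2 ^ 2)) :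
    ContDiff ℝ (⊤ : ℕ∞) G := by
  have hG' : G = compSqrtMulRpow H 1 ∘ fun p : ℝ × ℝ => p.1 ^ 2 + p.2 ^ 2 := by
    funext p
    rw [hG, Function.comp_apply, compSqrtMulRpow, rpow_neg_one, ← div_eq_mul_inv]
    split_ifs with hp
    · simp [hp, hH0]
    · rfl
  rw [hG']
  exact (contDiff_compSqrtMulRpow hH hH0 1).comp (by fun_prop)
end

section
/- Let γ : (0,∞) → ℝ² be the curve γ(t) = (t cos(e^{1/t}), t sin(e^{1/t})). Then (i) γ(t) → (0,0) as t → 0⁺, and (ii) the arc length of γ over the interval (0,1) is infinite: the function t ↦ ‖γ′(t)‖ is not Lebesgue integrable on (0,1), indeed ∫₀¹ ‖γ′(t)‖ dt = ∞. -/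
open MeasureTheory

/-- The spiral `γ(t) = (t cos(e^{1/t}), t sin(e^{1/t}))`. -/
noncomputable def spiral : ℝ → ℝ × ℝ :=
  fun t => (t * Real.cos (Real.exp (1 / t)), t * Real.sin (Real.exp (1 / t)))

/-- The Euclidean norm on `ℝ²`. -/
noncomputable def euclNorm (u : ℝ × ℝ) : ℝ := Real.sqrt (u.1 ^ 2 + u.2 ^ 2)

/-! The spiral is `r(t) = t`, `φ(t) = e^{1/t}` in polar coordinates, so its speed is
`√(r'² + (r φ')²) = √(1 + (e^{1/t}/t)²) ≥ 1/t`, which is not integrable at `0`. -/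

open Real Set Filter Topology

section PolarCurve

variable {r φ : ℝ → ℝ} {r' φ' t : ℝ}

theorem hasDerivAt_polar (hr : HasDerivAt r r' t) (hφ : HasDerivAt φ φ' t) :
    HasDerivAt (fun s => (r s * cos (φ s), r s * sin (φ s)))
      (r' * cos (φ t) - r t * φ' * sin (φ t), r' * sin (φ t) + r t * φ' * cos (φ t)) t :=
  ((hr.mul hφ.cos).prodMk (hr.mul hφ.sin)).congr_deriv (Prod.ext (by ring) (by ring))

theorem euclNorm_polar_velocity (a b θ : ℝ) :
    euclNorm (a * cos θ - b * sin θ, a * sin θ + b * cos θ) = √(a ^ 2 + b ^ 2) := by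
  unfold euclNorm
  congr 1
  linear_combination (a ^ 2 + b ^ 2) * sin_sq_add_cos_sq θ

end PolarCurve

theorem norm_spiral_le (t : ℝ) : ‖spiral t‖ ≤ ‖t‖ := by
  simp only [spiral, Prod.norm_def, norm_mul]
  exact max_le (mul_le_of_le_one_right (norm_nonneg t) (abs_cos_le_one _))
    (mul_le_of_le_one_right (norm_nonneg t) (abs_sin_le_one _))

theorem tendsto_spiral_zero : Tendsto spiral (𝓝 0) (𝓝 0) :=
  squeeze_zero_norm norm_spiral_le tendsto_norm_zero

theorem hasDerivAt_exp_one_div {t : ℝ} (ht : t ≠ 0) :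
    HasDerivAt (fun s => exp (1 / s)) (-(exp (1 / t) / t ^ 2)) t := by
  convert (hasDerivAt_inv ht).exp using 1 <;> simp [div_eq_mul_inv]

theorem euclNorm_deriv_spiral {t : ℝ} (ht : t ≠ 0) :
    euclNorm (deriv spiral t) = √(1 + (exp (1 / t) / t) ^ 2) := by
  have hderiv : HasDerivAt spiral _ t :=
    hasDerivAt_polar (hasDerivAt_id' t) (hasDerivAt_exp_one_div ht)
  rw [hderiv.deriv, euclNorm_polar_velocity]
  congr 1
  field_simp

theorem inv_le_euclNorm_deriv_spiral {t : ℝ} (ht : 0 < t) :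
    t⁻¹ ≤ euclNorm (deriv spiral t) := by
  rw [euclNorm_deriv_spiral ht.ne']
  calc t⁻¹ ≤ exp (1 / t) / t := by
        rw [div_eq_mul_inv]
        exact le_mul_of_one_le_left (inv_nonneg.2 ht.le) (one_le_exp (by positivity))
    _ ≤ |exp (1 / t) / t| := le_abs_self _
    _ ≤ √(1 + (exp (1 / t) / t) ^ 2) := abs_le_sqrt (by linarith)

theorem lintegral_inv_Ioo_zero_eq_top {a : ℝ} (ha : 0 < a) :
    ∫⁻ t in Ioo 0 a, ENNReal.ofReal t⁻¹ = ⊤ := by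
  by_contra h
  have hnonneg : 0 ≤ᵐ[volume.restrict (Ioo 0 a)] fun t : ℝ => t⁻¹ := by
    filter_upwards [ae_restrict_mem measurableSet_Ioo] with t ht using inv_nonneg.2 ht.1.le
  have hint : IntegrableOn (fun t : ℝ => t⁻¹) (Ioo 0 a) :=
    (lintegral_ofReal_ne_top_iff_integrable measurable_inv.aestronglyMeasurable hnonneg).1 h
  rw [← intervalIntegrable_iff_integrableOn_Ioo_of_le ha.le] at hint
  simp [intervalIntegrable_inv_iff, ha.ne] at hint

/-- (i) `γ(t) → (0,0)` as `t → 0⁺`, and (ii) the arc length of the spiral over `(0,1)`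
is infinite: `t ↦ ‖γ'(t)‖` is not Lebesgue integrable on `(0,1)`, indeed
`∫₀¹ ‖γ'(t)‖ dt = ∞`. -/
theorem stmt_7 :
    Filter.Tendsto spiral (nhdsWithin 0 (Set.Ioi 0)) (nhds ((0 : ℝ), (0 : ℝ))) ∧
    ¬ IntegrableOn (fun t => euclNorm (deriv spiral t)) (Set.Ioo (0 : ℝ) 1) ∧
    ∫⁻ t in Set.Ioo (0 : ℝ) 1, ENNReal.ofReal (euclNorm (deriv spiral t)) = ⊤ := by
  have hlength : ∫⁻ t in Ioo (0 : ℝ) 1, ENNReal.ofReal (euclNorm (deriv spiral t)) = ⊤ :=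
    eq_top_mono (setLIntegral_mono' measurableSet_Ioo fun t ht =>
      ENNReal.ofReal_le_ofReal (inv_le_euclNorm_deriv_spiral ht.1))
      (lintegral_inv_Ioo_zero_eq_top one_pos)
  exact ⟨tendsto_spiral_zero.mono_left nhdsWithin_le_nhds,
    fun hint => hint.lintegral_lt_top.ne hlength, hlength⟩
end

section
/- Let γ : (0,∞) → ℝ² be the curve γ(t) = (t cos(e^{1/t}), t sin(e^{1/t})). For p = (x,y) ∈ ℝ² with p ≠ 0, define the linear map M̂_p : ℝ² → ℝ² by M̂_p u = (⟨Jp, u⟩ p + ⟨p, u⟩ Jp)/‖p‖², where Jp = (−y, x) and ⟨·,·⟩ is the Euclidean inner product. Let R(t) = cross(γ′(t), M̂_{γ(t)} γ′(t))/‖γ′(t)‖ with cross(u,w) = u₁w₂ − u₂w₁. Then the function ℝ → ℝ defined by t ↦ t e^{−1/t} R(t) + 1 for t > 0 and by 0 for t ≤ 0 is infinitely differentiable. -/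
/-- The planar cross product `cross(u, w) = u₁w₂ - u₂w₁`. -/
def planarCross (u w : ℝ × ℝ) : ℝ := u.1 * w.2 - u.2 * w.1

/-- The Euclidean inner product on `ℝ²`. -/
def euclDot (u w : ℝ × ℝ) : ℝ := u.1 * w.1 + u.2 * w.2

/-- Rotation by `π/2`: `J(x, y) = (-y, x)`. -/
def rotJ (p : ℝ × ℝ) : ℝ × ℝ := (-p.2, p.1)

/-- The endomorphism `M̂_p u = (⟨Jp, u⟩ p + ⟨p, u⟩ Jp)/‖p‖²` associated to the symmetric
tensor `M = 2r dr dφ`. -/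
noncomputable def Mhat (p u : ℝ × ℝ) : ℝ × ℝ :=
  (1 / (euclNorm p) ^ 2) • (euclDot (rotJ p) u • p + euclDot p u • rotJ p)

/-- The quantity `R(t) = cross(γ'(t), M̂_{γ(t)} γ'(t)) / ‖γ'(t)‖`. -/
noncomputable def spiralR (t : ℝ) : ℝ :=
  planarCross (deriv spiral t) (Mhat (spiral t) (deriv spiral t)) / euclNorm (deriv spiral t)


/-!
Write `γ'(t)` in the moving polar frame `(e_r, e_φ)` of `γ(t)`. Since `M̂` swaps the two
components, `u = α e_r + β e_φ` gives `cross(u, M̂u) = α² - β²` and `‖u‖ = √(α² + β²)`.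
For the spiral `r = t`, `φ = e^{1/t}`, so `α = 1` and `β = -e^{1/t}/t`; with
`w = t e^{-1/t} = -1/β` this yields `t e^{-1/t} R(t) + 1 = 1 + (w² - 1)/√(w² + 1)`.
Since `w` extends smoothly by `0` to `t ≤ 0`, where this expression vanishes, the claim follows.
-/

open Real

/-- The vector `α e_r + β e_φ` in the polar frame at angle `φ`. -/
noncomputable def polarVec (φ α β : ℝ) : ℝ × ℝ :=
  (α * cos φ - β * sin φ, α * sin φ + β * cos φ)

lemma euclNorm_polarVec (φ α β : ℝ) : euclNorm (polarVec φ α β) = √(α ^ 2 + β ^ 2) := by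
  have h := cos_sq_add_sin_sq φ
  unfold euclNorm polarVec
  congr 1
  linear_combination (α ^ 2 + β ^ 2) * h

lemma Mhat_polarVec {φ r : ℝ} (hr : r ≠ 0) (α β : ℝ) :
    Mhat (polarVec φ r 0) (polarVec φ α β) = polarVec φ β α := by
  have h := cos_sq_add_sin_sq φ
  have hnorm : euclNorm (polarVec φ r 0) ^ 2 = r ^ 2 := by
    rw [euclNorm_polarVec, sq_sqrt (by positivity)]
    ring
  unfold Mhat
  rw [hnorm]
  simp only [polarVec, euclDot, rotJ, Prod.smul_mk, Prod.mk_add_mk, smul_eq_mul, Prod.mk.injEq]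
  constructor
  · field_simp
    linear_combination (β * cos φ - α * sin φ) * r ^ 2 * h
  · field_simp
    linear_combination (β * sin φ + α * cos φ) * r ^ 2 * h

lemma planarCross_polarVec_swap (φ α β : ℝ) :
    planarCross (polarVec φ α β) (polarVec φ β α) = α ^ 2 - β ^ 2 := by
  have h := cos_sq_add_sin_sq φ
  unfold planarCross polarVec
  linear_combination (α ^ 2 - β ^ 2) * h

lemma hasDerivAt_polarVec {r φ : ℝ → ℝ} {r' φ' t : ℝ} (hr : HasDerivAt r r' t)
    (hφ : HasDerivAt φ φ' t) :
    HasDerivAt (fun s => polarVec (φ s) (r s) 0) (polarVec (φ t) r' (r t * φ')) t := by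
  have h := (hr.mul (hφ.cos)).prodMk (hr.mul (hφ.sin))
  convert h using 1
  · ext s <;> simp [polarVec]
  · simp only [polarVec, Prod.mk.injEq]
    constructor <;> ring

lemma spiral_eq_polarVec : spiral = fun t => polarVec (exp (1 / t)) t 0 := by
  ext t <;> simp [spiral, polarVec]

lemma hasDerivAt_spiral {t : ℝ} (ht : t ≠ 0) :
    HasDerivAt spiral (polarVec (exp (1 / t)) 1 (-(exp (1 / t) / t))) t := by
  have hφ : HasDerivAt (fun s : ℝ => exp (1 / s)) (exp (1 / t) * -(1 / t ^ 2)) t := by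
    simpa [one_div] using (hasDerivAt_inv ht).exp
  rw [spiral_eq_polarVec]
  convert hasDerivAt_polarVec (hasDerivAt_id' t) hφ using 2
  field_simp

lemma spiralR_eq {t : ℝ} (ht : t ≠ 0) :
    spiralR t = (1 - (exp (1 / t) / t) ^ 2) / √(1 + (exp (1 / t) / t) ^ 2) := by
  rw [spiralR, (hasDerivAt_spiral ht).deriv, congrFun spiral_eq_polarVec t, Mhat_polarVec ht, planarCross_polarVec_swap,
    euclNorm_polarVec]
  ring_nf

lemma mul_sub_div_sqrt_inv {w : ℝ} (hw : 0 < w) :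
    w * ((1 - w⁻¹ ^ 2) / √(1 + w⁻¹ ^ 2)) = (w ^ 2 - 1) / √(w ^ 2 + 1) := by
  have hsqrt : √(1 + w⁻¹ ^ 2) = √(w ^ 2 + 1) / w := by
    rw [show 1 + w⁻¹ ^ 2 = (w ^ 2 + 1) / w ^ 2 by field_simp, sqrt_div' _ (by positivity),
      sqrt_sq hw.le]
  rw [hsqrt]
  field_simp

lemma contDiff_one_add_sq_sub_one_div_sqrt {n : WithTop ℕ∞} {w : ℝ → ℝ} (hw : ContDiff ℝ n w) :
    ContDiff ℝ n fun t => 1 + (w t ^ 2 - 1) / √(w t ^ 2 + 1) :=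
  contDiff_const.add (((hw.pow 2).sub contDiff_const).div
    ((hw.pow 2).add contDiff_const |>.sqrt fun t => by positivity) fun t => by positivity)

/-- The function equal to `t e^{-1/t} R(t) + 1` for `t > 0` and to `0` for `t ≤ 0`
is infinitely differentiable. -/
theorem stmt_10 (G : ℝ → ℝ)
    (hG : ∀ t : ℝ, G t = if 0 < t then t * Real.exp (-(1 / t)) * spiralR t + 1 else 0) :
    ContDiff ℝ (⊤ : ℕ∞) G := by
  suffices hGw :
      G = fun t => 1 + ((t * expNegInvGlue t) ^ 2 - 1) / √((t * expNegInvGlue t) ^ 2 + 1) by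
    rw [hGw]
    exact contDiff_one_add_sq_sub_one_div_sqrt (contDiff_id.mul expNegInvGlue.contDiff)
  ext t
  rw [hG t]
  rcases le_or_gt t 0 with ht | ht
  · simp [expNegInvGlue.zero_of_nonpos ht, ht.not_gt]
  · have hinv : (t * exp (-(1 / t)))⁻¹ = exp (1 / t) / t := by rw [exp_neg]; field_simp
    rw [if_pos ht, spiralR_eq ht.ne', ← hinv, mul_sub_div_sqrt_inv (by positivity), add_comm,
      expNegInvGlue, if_neg ht.not_ge, one_div]
end

section
/- Let γ : ℝ → ℝ³ be infinitely differentiable with ‖γ′(t)‖ = 1 for all t. Then the following are equivalent: (i) for all t, γ′′′(t) = −‖γ′′(t)‖² γ′(t); (ii) the vector-valued function t ↦ γ′(t) × γ′′(t) (Euclidean cross product in ℝ³) is constant. -/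
/-- The Euclidean cross product in `ℝ³`. -/
def cross3 (u v : EuclideanSpace ℝ (Fin 3)) : EuclideanSpace ℝ (Fin 3) :=
  WithLp.toLp 2 ![u 1 * v 2 - u 2 * v 1, u 2 * v 0 - u 0 * v 2, u 0 * v 1 - u 1 * v 0]

/-!
Unit speed gives `⟪γ', γ''⟫ = 0`, and differentiating once more `⟪γ', γ'''⟫ = -‖γ''‖²`.
Since `γ'' × γ'' = 0`, the derivative of `γ' × γ''` is `γ' × γ'''`, which vanishes when
`γ''' = -‖γ''‖² γ'`. Conversely, if `γ' × γ''' = 0`, the triple product expansion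
`γ' × (γ' × γ''') = ⟪γ', γ'''⟫ γ' - ‖γ'‖² γ'''` gives `γ''' = ⟪γ', γ'''⟫ γ' = -‖γ''‖² γ'`.
-/

open Matrix RealInnerProductSpace

local notation "ℝ³" => EuclideanSpace ℝ (Fin 3)

theorem cross3_eq_toLp_cross (u v : ℝ³) :
    cross3 u v = WithLp.toLp 2 (u.ofLp ⨯₃ v.ofLp) := by
  rw [cross_apply]; rfl

theorem cross3_self (u : ℝ³) : cross3 u u = 0 := by
  rw [cross3_eq_toLp_cross, cross_self]; rfl

theorem cross3_cross3_self (u v : ℝ³) :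
    cross3 u (cross3 u v) = ⟪u, v⟫ • u - ‖u‖ ^ 2 • v := by
  simp only [cross3_eq_toLp_cross, cross_cross_eq_smul_sub_smul', ← real_inner_self_eq_norm_sq,
    EuclideanSpace.inner_eq_star_dotProduct, star_trivial, dotProduct_comm v.ofLp]
  rfl

noncomputable def cross3CLM : ℝ³ →L[ℝ] ℝ³ →L[ℝ] ℝ³ :=
  let L := WithLp.linearEquiv 2 ℝ (Fin 3 → ℝ)
  LinearMap.toContinuousLinearMap
    (LinearMap.toContinuousLinearMap.toLinearMap ∘ₗ
      ((crossProduct.compl₁₂ L.toLinearMap L.toLinearMap).compr₂ L.symm.toLinearMap))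

theorem cross3CLM_apply (u v : ℝ³) : cross3CLM u v = cross3 u v := by
  rw [cross3_eq_toLp_cross]; rfl

theorem cross3_smul_self (c : ℝ) (u : ℝ³) : cross3 u (c • u) = 0 := by
  rw [← cross3CLM_apply, map_smul, cross3CLM_apply, cross3_self, smul_zero]

theorem eq_inner_smul_of_cross3_eq_zero {u v : ℝ³} (hu : ‖u‖ = 1) (h : cross3 u v = 0) :
    v = ⟪u, v⟫ • u := by
  have := cross3_cross3_self u v
  rw [h, ← cross3CLM_apply, map_zero, hu, one_pow, one_smul] at this
  exact (sub_eq_zero.mp this.symm).symm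

theorem HasDerivAt.cross3 {f g : ℝ → ℝ³} {f' g' : ℝ³} {t : ℝ} (hf : HasDerivAt f f' t)
    (hg : HasDerivAt g g' t) :
    HasDerivAt (fun s => cross3 (f s) (g s)) (cross3 (f t) g' + cross3 f' (g t)) t := by
  simpa only [cross3CLM_apply] using
    cross3CLM.hasDerivAt_of_bilinear (fun _ => hf) (fun _ => hg)

theorem inner_add_inner_eq_zero_of_inner_const {E : Type*} [NormedAddCommGroup E]
    [InnerProductSpace ℝ E] {f g f' g' : ℝ → E} {c : ℝ}
    (hf : ∀ t, HasDerivAt f (f' t) t) (hg : ∀ t, HasDerivAt g (g' t) t)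
    (hfg : ∀ t, ⟪f t, g t⟫ = c) (t : ℝ) : ⟪f t, g' t⟫ + ⟪f' t, g t⟫ = 0 := by
  have hconst : HasDerivAt (fun s => ⟪f s, g s⟫) 0 t := by
    simpa only [hfg] using hasDerivAt_const t c
  exact ((hf t).inner ℝ (hg t)).unique hconst

/-- For a smooth unit-speed curve `γ` in Euclidean `ℝ³`, the flat conformal geodesic
equation `γ''' = -‖γ''‖² γ'` holds iff `t ↦ γ'(t) × γ''(t)` is constant. -/
theorem stmt_13 (γ : ℝ → EuclideanSpace ℝ (Fin 3)) (hγ : ContDiff ℝ (⊤ : ℕ∞) γ)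
    (hunit : ∀ t : ℝ, ‖deriv γ t‖ = 1) :
    (∀ t : ℝ, deriv (deriv (deriv γ)) t = -(‖deriv (deriv γ) t‖ ^ 2) • deriv γ t) ↔
      (∃ c : EuclideanSpace ℝ (Fin 3),
        ∀ t : ℝ, cross3 (deriv γ t) (deriv (deriv γ) t) = c) := by
  set u := deriv γ
  set a := deriv u
  have hu_smooth : ContDiff ℝ (⊤ : ℕ∞) u := (contDiff_infty_iff_deriv.mp hγ).2
  have ha_smooth : ContDiff ℝ (⊤ : ℕ∞) a := (contDiff_infty_iff_deriv.mp hu_smooth).2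
  have hu : ∀ t, HasDerivAt u (a t) t := fun t => (hu_smooth.differentiable (by simp) t).hasDerivAt
  have ha : ∀ t, HasDerivAt a (deriv a t) t :=
    fun t => (ha_smooth.differentiable (by simp) t).hasDerivAt
  have hua : ∀ t, ⟪u t, a t⟫ = 0 := fun t => by
    have := inner_add_inner_eq_zero_of_inner_const hu hu (c := 1)
      (fun s => by rw [real_inner_self_eq_norm_sq, hunit s, one_pow]) t
    linarith [real_inner_comm (u t) (a t)]
  have hua' : ∀ t, ⟪u t, deriv a t⟫ = -‖a t‖ ^ 2 := fun t => by
    have := inner_add_inner_eq_zero_of_inner_const hu ha hua t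
    rw [real_inner_self_eq_norm_sq] at this
    linarith
  have hcross : ∀ t, HasDerivAt (fun s => cross3 (u s) (a s)) (cross3 (u t) (deriv a t)) t :=
    fun t => by simpa only [cross3_self, add_zero] using (hu t).cross3 (ha t)
  constructor
  · intro hgeo
    refine ⟨cross3 (u 0) (a 0), fun t => is_const_of_deriv_eq_zero
      (fun s => (hcross s).differentiableAt) (fun s => ?_) t 0⟩
    rw [(hcross s).deriv, hgeo, cross3_smul_self]
  · rintro ⟨c, hc⟩ t
    have hzero : cross3 (u t) (deriv a t) = 0 :=
      (hcross t).unique (by simpa only [hc] using hasDerivAt_const t c)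
    rw [eq_inner_smul_of_cross3_eq_zero (hunit t) hzero, hua']
end

section
/- Let H : ℝ → ℝ be infinitely differentiable with H(t) = 0 for all t ≤ 0. Define g : ℝ³ → (3×3 real symmetric matrices) as follows: for (x,y,z) with r = √(x²+y²) > 0, set s = H(r) and g₁₁ = 1 + s²z⁴ − 4 s z² x y / r², g₂₂ = 1 + s²z⁴ + 4 s z² x y / r², g₁₂ = g₂₁ = 2 s z² (x² − y²)/r², g₃₃ = 1, g₁₃ = g₃₁ = g₂₃ = g₃₂ = 0; and for x = y = 0 set g to be the identity matrix. Then g is infinitely differentiable on all of ℝ³ (every entry is a smooth function of (x,y,z)). -/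
/-!
Write `ρ = x² + y²`. Off the axis `r² = ρ`, so the entries of `g` are polynomials in `x, y, z`,
`H (√ρ)` and `H (√ρ) / ρ`, and on the axis they agree with the same expressions because `H 0 = 0`.
Since `H` vanishes on `(-∞, 0]`, it is flat at `0`, and for such a flat smooth `f` both `f ∘ √`
and `t ↦ f t / t ^ k` are smooth: each is differentiable with derivative a linear combination of
functions of the same two kinds, its derivative at `0` vanishing because `f t / t ^ k → 0`
(l'Hôpital), and a class of functions closed under differentiation in this sense consists of
smooth functions.
-/

open Filter Topology Set
open scoped ContDiff

theorem contDiff_of_hasDerivAt_mem_span {𝕜 F : Type*} [NontriviallyNormedField 𝕜]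
    [NormedAddCommGroup F] [NormedSpace 𝕜 F] {S : Set (𝕜 → F)}
    (hS : ∀ φ ∈ S, ∃ φ' ∈ Submodule.span 𝕜 S, ∀ x, HasDerivAt φ (φ' x) x)
    {φ : 𝕜 → F} (hφ : φ ∈ S) : ContDiff 𝕜 ∞ φ := by
  suffices ∀ n : ℕ, ∀ φ ∈ S, ContDiff 𝕜 n φ from contDiff_infty.2 fun n => this n φ hφ
  intro n
  induction n with
  | zero =>
    intro φ hφ
    obtain ⟨φ', -, hφ'⟩ := hS φ hφ
    exact contDiff_zero.2 (continuous_iff_continuousAt.2 fun x => (hφ' x).continuousAt)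
  | succ n ih =>
    intro φ hφ
    obtain ⟨φ', hφ'S, hφ'⟩ := hS φ hφ
    rw [Nat.cast_succ, contDiff_succ_iff_deriv, funext fun x => (hφ' x).deriv]
    refine ⟨fun x => (hφ' x).differentiableAt, by simp, ?_⟩
    clear hφ'
    induction hφ'S using Submodule.span_induction with
    | mem ψ hψ => exact ih ψ hψ
    | zero => exact contDiff_const
    | add _ _ _ _ h₁ h₂ => exact h₁.add h₂
    | smul c _ _ h => exact h.const_smul c

theorem eqOn_deriv_zero_of_eqOn_Iic {F : Type*} [NormedAddCommGroup F] [NormedSpace ℝ F]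
    {f : ℝ → F} {a : ℝ} (hf : Differentiable ℝ f) (h : EqOn f 0 (Iic a)) :
    EqOn (deriv f) 0 (Iic a) := fun t ht =>
  (uniqueDiffOn_Iic a t ht).eq_deriv _ (hf t).hasDerivAt.hasDerivWithinAt
    ((hasDerivWithinAt_const t _ 0).congr h (h ht))

theorem eqOn_div_pow_of_eqOn_Iic {f : ℝ → ℝ} {a : ℝ} (h : EqOn f 0 (Iic a)) (k : ℕ) :
    EqOn (fun t => f t / t ^ k) 0 (Iic a) := fun t ht => by simp [h ht]

theorem tendsto_div_pow_of_eqOn_Iic {f : ℝ → ℝ} (hf : ContDiff ℝ ∞ f) (h : EqOn f 0 (Iic 0))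
    (k : ℕ) : Tendsto (fun t => f t / t ^ k) (𝓝[≠] 0) (𝓝 0) := by
  induction k generalizing f with
  | zero =>
    simpa using tendsto_nhdsWithin_of_tendsto_nhds
      (by simpa [h self_mem_Iic] using hf.continuous.tendsto 0)
  | succ k ih =>
    have hf' := contDiff_infty_iff_deriv.1 hf
    refine HasDerivAt.lhopital_zero_nhdsNE (f' := deriv f) (g' := fun t => (k + 1) * t ^ k)
      (.of_forall fun t => (hf'.1 t).hasDerivAt)
      (.of_forall fun t => by simpa using hasDerivAt_pow (k + 1) t)
      (eventually_nhdsWithin_of_forall fun t ht => mul_ne_zero (by positivity) (pow_ne_zero _ ht))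
      ?_ ?_ ?_
    · exact tendsto_nhdsWithin_of_tendsto_nhds
        (by simpa [h self_mem_Iic] using hf.continuous.tendsto 0)
    · exact tendsto_nhdsWithin_of_tendsto_nhds
        (by simpa using (continuous_pow (k + 1)).tendsto (0 : ℝ))
    · simpa [div_mul_eq_div_div_swap] using
        (ih hf'.2 (eqOn_deriv_zero_of_eqOn_Iic hf'.1 h)).div_const ((k : ℝ) + 1)

theorem hasDerivAt_div_pow_of_eqOn_Iic {f : ℝ → ℝ} (hf : ContDiff ℝ ∞ f) (h : EqOn f 0 (Iic 0))
    (k : ℕ) (x : ℝ) :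
    HasDerivAt (fun t => f t / t ^ k) (deriv f x / x ^ k - k * (f x / x ^ (k + 1))) x := by
  have hfd : Differentiable ℝ f := hf.differentiable (by simp)
  rcases eq_or_ne x 0 with rfl | hx
  · have hf₀ : f 0 = 0 := h self_mem_Iic
    have hf'₀ : deriv f 0 = 0 := eqOn_deriv_zero_of_eqOn_Iic hfd h self_mem_Iic
    rw [hasDerivAt_iff_tendsto_slope]
    simp only [hf₀, hf'₀, zero_div, mul_zero, sub_zero]
    refine (tendsto_div_pow_of_eqOn_Iic hf h (k + 1)).congr fun t => ?_
    rw [slope_def_field, hf₀, zero_div, sub_zero, sub_zero, div_div, pow_succ]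
  · refine ((hfd x).hasDerivAt.div (hasDerivAt_pow k x) (pow_ne_zero k hx)).congr_deriv ?_
    rcases k with _ | k
    · simp
    · rw [add_tsub_cancel_right]
      field_simp
      ring

theorem contDiff_div_pow_of_eqOn_Iic {f : ℝ → ℝ} (hf : ContDiff ℝ ∞ f) (h : EqOn f 0 (Iic 0))
    (k : ℕ) : ContDiff ℝ ∞ (fun t => f t / t ^ k) := by
  let S : Set (ℝ → ℝ) :=
    {φ | ∃ f : ℝ → ℝ, ∃ k : ℕ, ContDiff ℝ ∞ f ∧ EqOn f 0 (Iic 0) ∧ φ = fun t => f t / t ^ k}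
  refine contDiff_of_hasDerivAt_mem_span (S := S) ?_ ⟨f, k, hf, h, rfl⟩
  rintro _ ⟨f, k, hf, h, rfl⟩
  have hf' := contDiff_infty_iff_deriv.1 hf
  refine ⟨(fun t => deriv f t / t ^ k) - (k : ℝ) • fun t => f t / t ^ (k + 1), ?_,
    hasDerivAt_div_pow_of_eqOn_Iic hf h k⟩
  exact Submodule.sub_mem _
    (Submodule.subset_span ⟨_, k, hf'.2, eqOn_deriv_zero_of_eqOn_Iic hf'.1 h, rfl⟩)
    (Submodule.smul_mem _ _ (Submodule.subset_span ⟨f, k + 1, hf, h, rfl⟩))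

theorem eqOn_comp_sqrt_of_eqOn_Iic {f : ℝ → ℝ} (h : EqOn f 0 (Iic 0)) :
    EqOn (fun u => f (√u)) 0 (Iic 0) := fun u hu => by
  simp [Real.sqrt_eq_zero'.2 hu, h self_mem_Iic]

theorem hasDerivAt_comp_sqrt_of_eqOn_Iic {f : ℝ → ℝ} (hf : ContDiff ℝ ∞ f)
    (h : EqOn f 0 (Iic 0)) (u : ℝ) :
    HasDerivAt (fun u => f (√u)) (2⁻¹ * (deriv f (√u) / √u)) u := by
  rcases lt_trichotomy u 0 with hu | rfl | hu
  · rw [Real.sqrt_eq_zero'.2 hu.le, div_zero, mul_zero]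
    refine (hasDerivAt_const u 0).congr_of_eventuallyEq ?_
    filter_upwards [Iio_mem_nhds hu] with v hv using
      eqOn_comp_sqrt_of_eqOn_Iic h (show v ≤ 0 from le_of_lt hv)
  · -- the slope of `f ∘ √` at `0` is `(f / t²) ∘ √`, which is continuous and vanishes at `0`
    have hslope : slope (fun u => f (√u)) 0 = fun u => f (√u) / √u ^ 2 := by
      funext u
      rcases le_or_gt u 0 with hu | hu
      · simp [slope_def_field, Real.sqrt_eq_zero'.2 hu, h self_mem_Iic]
      · simp [slope_def_field, Real.sq_sqrt hu.le, h self_mem_Iic]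
    rw [Real.sqrt_zero, div_zero, mul_zero, hasDerivAt_iff_tendsto_slope, hslope]
    have := ((contDiff_div_pow_of_eqOn_Iic hf h 2).continuous.comp Real.continuous_sqrt).tendsto 0
    simpa [Function.comp_def, h self_mem_Iic] using this.mono_left nhdsWithin_le_nhds
  · refine ((hf.differentiable (by simp) _).hasDerivAt.comp u
      (Real.hasDerivAt_sqrt hu.ne')).congr_deriv ?_
    field_simp

theorem contDiff_comp_sqrt_of_eqOn_Iic {f : ℝ → ℝ} (hf : ContDiff ℝ ∞ f) (h : EqOn f 0 (Iic 0)) :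
    ContDiff ℝ ∞ (fun u => f (√u)) := by
  let S : Set (ℝ → ℝ) :=
    {φ | ∃ f : ℝ → ℝ, ContDiff ℝ ∞ f ∧ EqOn f 0 (Iic 0) ∧ φ = fun u => f (√u)}
  refine contDiff_of_hasDerivAt_mem_span (S := S) ?_ ⟨f, hf, h, rfl⟩
  rintro _ ⟨f, hf, h, rfl⟩
  have hf' := contDiff_infty_iff_deriv.1 hf
  refine ⟨(2⁻¹ : ℝ) • fun u => deriv f (√u) / √u ^ 1, ?_,
    by simpa using hasDerivAt_comp_sqrt_of_eqOn_Iic hf h⟩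
  exact Submodule.smul_mem _ _ (Submodule.subset_span ⟨_,
    contDiff_div_pow_of_eqOn_Iic hf'.2 (eqOn_deriv_zero_of_eqOn_Iic hf'.1 h) 1,
    eqOn_div_pow_of_eqOn_Iic (eqOn_deriv_zero_of_eqOn_Iic hf'.1 h) 1, rfl⟩)

/-- The matrix of the statement written in terms of `ρ = x² + y²`, where `a ρ = H (√ρ)` and
`b ρ = H (√ρ) / ρ`; in this form no division by `r²` is left. -/
def metricMatrix (a b : ℝ → ℝ) (x y z : ℝ) : Matrix (Fin 3) (Fin 3) ℝ :=
  !![1 + a (x ^ 2 + y ^ 2) ^ 2 * z ^ 4 - 4 * z ^ 2 * x * y * b (x ^ 2 + y ^ 2),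
    2 * z ^ 2 * (x ^ 2 - y ^ 2) * b (x ^ 2 + y ^ 2), 0;
    2 * z ^ 2 * (x ^ 2 - y ^ 2) * b (x ^ 2 + y ^ 2),
    1 + a (x ^ 2 + y ^ 2) ^ 2 * z ^ 4 + 4 * z ^ 2 * x * y * b (x ^ 2 + y ^ 2), 0;
    0, 0, 1]

theorem contDiff_metricMatrix_apply {a b : ℝ → ℝ} (ha : ContDiff ℝ ∞ a) (hb : ContDiff ℝ ∞ b)
    (i j : Fin 3) : ContDiff ℝ ∞ fun p : ℝ × ℝ × ℝ => metricMatrix a b p.1 p.2.1 p.2.2 i j := by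
  fin_cases i <;> fin_cases j <;>
    simp only [metricMatrix, Fin.zero_eta, Fin.mk_one, Fin.reduceFinMk, Fin.isValue,
    Matrix.of_apply, Matrix.cons_val', Matrix.cons_val, Matrix.cons_val_zero, Matrix.cons_val_one,
    Matrix.cons_val_fin_one] <;>
    fun_prop

/-- Let `H : ℝ → ℝ` be infinitely differentiable with `H(t) = 0` for `t ≤ 0`. The matrix
field `g : ℝ³ → Matrix (Fin 3) (Fin 3) ℝ` given, for `r = √(x²+y²) > 0` and `s = H(r)`, by
`g₁₁ = 1 + s²z⁴ - 4sz²xy/r²`, `g₂₂ = 1 + s²z⁴ + 4sz²xy/r²`, `g₁₂ = g₂₁ = 2sz²(x²-y²)/r²`,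
`g₃₃ = 1`, `g₁₃ = g₃₁ = g₂₃ = g₃₂ = 0`, and equal to the identity when `x = y = 0`,
has all entries infinitely differentiable on `ℝ³`. -/
theorem stmt_14 (H : ℝ → ℝ) (hH : ContDiff ℝ (⊤ : ℕ∞) H) (hH0 : ∀ t ≤ (0 : ℝ), H t = 0)
    (g : ℝ × ℝ × ℝ → Matrix (Fin 3) (Fin 3) ℝ)
    (hg : ∀ x y z : ℝ, 0 < Real.sqrt (x ^ 2 + y ^ 2) →
      g (x, y, z) =
        !![1 + (H (Real.sqrt (x ^ 2 + y ^ 2))) ^ 2 * z ^ 4 -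
              4 * H (Real.sqrt (x ^ 2 + y ^ 2)) * z ^ 2 * x * y / (Real.sqrt (x ^ 2 + y ^ 2)) ^ 2,
            2 * H (Real.sqrt (x ^ 2 + y ^ 2)) * z ^ 2 * (x ^ 2 - y ^ 2) /
              (Real.sqrt (x ^ 2 + y ^ 2)) ^ 2, 0;
            2 * H (Real.sqrt (x ^ 2 + y ^ 2)) * z ^ 2 * (x ^ 2 - y ^ 2) /
              (Real.sqrt (x ^ 2 + y ^ 2)) ^ 2,
            1 + (H (Real.sqrt (x ^ 2 + y ^ 2))) ^ 2 * z ^ 4 +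
              4 * H (Real.sqrt (x ^ 2 + y ^ 2)) * z ^ 2 * x * y / (Real.sqrt (x ^ 2 + y ^ 2)) ^ 2,
            0;
            0, 0, 1])
    (hg0 : ∀ z : ℝ, g (0, 0, z) = 1) :
    ∀ i j : Fin 3, ContDiff ℝ (⊤ : ℕ∞) (fun p : ℝ × ℝ × ℝ => g p i j) := by
  have hH0' : EqOn H 0 (Iic 0) := fun t ht => hH0 t ht
  set A : ℝ → ℝ := fun u => H (√u)
  have hA : ContDiff ℝ ∞ A := contDiff_comp_sqrt_of_eqOn_Iic hH hH0'
  have hB : ContDiff ℝ ∞ fun u => A u / u := by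
    simpa using contDiff_div_pow_of_eqOn_Iic hA (eqOn_comp_sqrt_of_eqOn_Iic hH0') 1
  have hg' : g = fun p => metricMatrix A (fun u => A u / u) p.1 p.2.1 p.2.2 := by
    funext ⟨x, y, z⟩
    rcases (add_nonneg (sq_nonneg x) (sq_nonneg y)).eq_or_lt with hr | hr
    · obtain ⟨rfl, rfl⟩ : x = 0 ∧ y = 0 := by constructor <;> nlinarith [sq_nonneg x, sq_nonneg y]
      simp [hg0, metricMatrix, Matrix.one_fin_three, A, hH0]
    · rw [hg x y z (Real.sqrt_pos.2 hr), Real.sq_sqrt hr.le, metricMatrix]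
      simp only [A]
      ring_nf
  subst hg'
  exact contDiff_metricMatrix_apply hA hB
end

section
/- Let H : ℝ → ℝ and let (x,y,z) ∈ ℝ³ with r = √(x²+y²) > 0 and |H(r)| z² < 1. Then the symmetric matrix g(x,y,z) with entries g₁₁ = 1 + H(r)²z⁴ − 4 H(r) z² x y / r², g₂₂ = 1 + H(r)²z⁴ + 4 H(r) z² x y / r², g₁₂ = g₂₁ = 2 H(r) z² (x² − y²)/r², g₃₃ = 1, g₁₃ = g₂₃ = 0 is positive definite. -/
/-!
In the orthonormal coframe `ě_r = (x dx + y dy)/r`, `ě_φ = (x dy - y dx)/r` the metric is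
`(ě_r + c ě_φ)² + (ě_φ + c ě_r)² + dz²` with `c = H(r) z²`, so `g = Aᵀ A` where the rows of `A`
are these three covectors. Since `det A = 1 - c²`, the matrix `A` is invertible when `c² < 1`,
and `Aᵀ A` is then positive definite.
-/

open Matrix

namespace Coframe

variable (c x y r : ℝ)

noncomputable def matrix : Matrix (Fin 3) (Fin 3) ℝ :=
  !![(x - c * y) / r, (y + c * x) / r, 0;
     (c * x - y) / r, (x + c * y) / r, 0;
     0, 0, 1]

variable {c x y r}

theorem det_matrix (hr0 : r ≠ 0) (hr : r ^ 2 = x ^ 2 + y ^ 2) :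
    (matrix c x y r).det = 1 - c ^ 2 := by
  simp only [matrix, det_fin_three, Fin.isValue, of_apply, cons_val', cons_val_zero,
    cons_val_fin_one, cons_val_one, cons_val, mul_one, mul_zero, sub_zero, add_zero, zero_mul]
  field_simp
  linear_combination (1 - c ^ 2) * hr.symm

theorem transpose_matrix_mul_matrix (hr0 : r ≠ 0) (hr : r ^ 2 = x ^ 2 + y ^ 2) :
    (matrix c x y r)ᵀ * matrix c x y r =
      !![1 + c ^ 2 - 4 * c * x * y / r ^ 2, 2 * c * (x ^ 2 - y ^ 2) / r ^ 2, 0;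
         2 * c * (x ^ 2 - y ^ 2) / r ^ 2, 1 + c ^ 2 + 4 * c * x * y / r ^ 2, 0;
         0, 0, 1] := by
  ext i j
  fin_cases i <;> fin_cases j <;> simp [matrix, mul_apply, Fin.sum_univ_three] <;>
    field_simp <;> grind

theorem posDef_transpose_matrix_mul_matrix (hr0 : r ≠ 0) (hr : r ^ 2 = x ^ 2 + y ^ 2)
    (hc : c ^ 2 ≠ 1) : ((matrix c x y r)ᵀ * matrix c x y r).PosDef := by
  rw [← conjTranspose_eq_transpose_of_trivial]
  refine PosDef.conjTranspose_mul_self _ (mulVec_injective_iff_isUnit.mpr ?_)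
  rw [isUnit_iff_isUnit_det, isUnit_iff_ne_zero, det_matrix hr0 hr, sub_ne_zero]
  exact hc.symm

end Coframe

/-- For `r = √(x² + y²) > 0` and `|H(r)| z² < 1`, the symmetric matrix with entries
`g₁₁ = 1 + H(r)²z⁴ - 4H(r)z²xy/r²`, `g₂₂ = 1 + H(r)²z⁴ + 4H(r)z²xy/r²`,
`g₁₂ = g₂₁ = 2H(r)z²(x² - y²)/r²`, `g₃₃ = 1`, `g₁₃ = g₂₃ = 0` is positive definite. -/
theorem stmt_15 (H : ℝ → ℝ) (x y z r : ℝ) (hr : r = Real.sqrt (x ^ 2 + y ^ 2))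
    (hrpos : 0 < r) (hH : |H r| * z ^ 2 < 1) :
    (!![1 + (H r) ^ 2 * z ^ 4 - 4 * H r * z ^ 2 * x * y / r ^ 2,
        2 * H r * z ^ 2 * (x ^ 2 - y ^ 2) / r ^ 2, 0;
        2 * H r * z ^ 2 * (x ^ 2 - y ^ 2) / r ^ 2,
        1 + (H r) ^ 2 * z ^ 4 + 4 * H r * z ^ 2 * x * y / r ^ 2, 0;
        0, 0, 1] : Matrix (Fin 3) (Fin 3) ℝ).PosDef := by
  have hr2 : r ^ 2 = x ^ 2 + y ^ 2 := by rw [hr, Real.sq_sqrt (by positivity)]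
  have hc : |H r * z ^ 2| < 1 := by rwa [abs_mul, abs_of_nonneg (sq_nonneg z)]
  rw [show H r ^ 2 * z ^ 4 = (H r * z ^ 2) ^ 2 by ring,
    show 4 * H r * z ^ 2 * x * y = 4 * (H r * z ^ 2) * x * y by ring,
    show 2 * H r * z ^ 2 * (x ^ 2 - y ^ 2) = 2 * (H r * z ^ 2) * (x ^ 2 - y ^ 2) by ring,
    ← Coframe.transpose_matrix_mul_matrix hrpos.ne' hr2]
  exact Coframe.posDef_transpose_matrix_mul_matrix hrpos.ne' hr2 ((sq_lt_one_iff_abs_lt_one _).mpr hc).ne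
end
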